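/- Proposition 1(II): Let G be a finite simple connected graph on vertex set V with at least two vertices, let c : V → ℝ be uniquely balanced with respect to G, and set m₀ := min { |Σ_{v∈S} c(v)| : S a nonempty proper subset of V with G[S] connected }. Then m₀ > 0, and for every spanning subgraph H of G, H is disconnected if and only if val(H, c) ≥ 2·m₀. -/

import Mathlib

open Matrix
open scoped Classical

/-- `c : V → ℝ` is *uniquely balanced* with respect to `G` if its entries sum to zero over `V`,
and sum to a nonzero value over every nonempty proper subset `S ⊊ V` inducing a connected
subgraph of `G`. -/
def UniquelyBalanced {V : Type} [Fintype V] (G : SimpleGraph V) (c : V → ℝ) : Prop :=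
  (∑ v, c v = 0) ∧
    ∀ S : Set V, S.Nonempty → S ≠ Set.univ → (G.induce S).Connected →
      ∑ v ∈ S.toFinset, c v ≠ 0

/-- The optimal value `val(H, c)` of the connectedness LP: minimize `Σ (d₊ + d₋)` over
`θ, d₊, d₋ : V → ℝ` subject to `d₊ ≥ 0`, `d₋ ≥ 0` and `L_H θ = c + d₊ − d₋`. -/
noncomputable def lpVal {V : Type} [Fintype V] [DecidableEq V]
    (H : SimpleGraph V) (c : V → ℝ) : ℝ :=
  sInf {x : ℝ | ∃ θ dp dm : V → ℝ, (∀ v, 0 ≤ dp v) ∧ (∀ v, 0 ≤ dm v) ∧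
    H.lapMatrix ℝ *ᵥ θ = c + dp - dm ∧ x = ∑ v, (dp v + dm v)}

/-!
Summing `L_H θ` over a connected component `C` of `H` gives `0`, because the indicator of `C`
lies in the kernel of the symmetric matrix `L_H`. Hence every feasible point of the LP pays at
least `|Σ_{v ∈ C} c v|` in `Σ (d₊ + d₋)` on `C`. If `H ≤ G` is disconnected, each component is a
nonempty proper subset inducing a connected subgraph of `G`, so two distinct components cost at
least `m₀` each. If `H` is connected, the kernel of `L_H` is one-dimensional, so its range is
exactly the hyperplane of sum-zero vectors; it contains `c`, giving a feasible point of cost `0`.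
-/

namespace SimpleGraph

variable {V : Type*}

theorem ConnectedComponent.connected_induce_supp_of_le {G H : SimpleGraph V} (hHG : H ≤ G)
    (C : H.ConnectedComponent) : (G.induce C.supp).Connected :=
  (maximal_connected_induce_supp C).prop.mono fun _ _ h => hHG h

theorem ConnectedComponent.supp_ne_univ_of_ne {H : SimpleGraph V} {C D : H.ConnectedComponent}
    (hCD : C ≠ D) : C.supp ≠ Set.univ := fun huniv =>
  hCD <| ConnectedComponent.eq_of_common_vertex (huniv ▸ Set.mem_univ D.out) D.out_eq

theorem exists_connectedComponent_ne_of_not_connected [Nonempty V] {H : SimpleGraph V}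
    (hH : ¬H.Connected) : ∃ C D : H.ConnectedComponent, C ≠ D := by
  obtain ⟨u, v, huv⟩ : ∃ u v, ¬H.Reachable u v := by
    simpa [connected_iff, Preconnected] using hH
  exact ⟨_, _, fun h => huv (ConnectedComponent.exact h)⟩

variable [Fintype V] [DecidableEq V] {H : SimpleGraph V} [DecidableRel H.Adj]

theorem ConnectedComponent.sum_supp_add_sum_supp_le {C D : H.ConnectedComponent} (hCD : C ≠ D)
    {f : V → ℝ} (hf : ∀ v, 0 ≤ f v) :
    ∑ v ∈ C.supp.toFinset, f v + ∑ v ∈ D.supp.toFinset, f v ≤ ∑ v, f v := by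
  have hdisj := Set.disjoint_toFinset.2 (pairwise_disjoint_supp_connectedComponent H hCD)
  rw [← Finset.sum_union hdisj]
  exact Finset.sum_le_univ_sum_of_nonneg hf

theorem dotProduct_lapMatrix_mulVec_eq_zero {x : V → ℝ} (hx : H.lapMatrix ℝ *ᵥ x = 0)
    (θ : V → ℝ) : x ⬝ᵥ (H.lapMatrix ℝ *ᵥ θ) = 0 := by
  rw [dotProduct_mulVec, ← mulVec_transpose, (H.isSymm_lapMatrix ℝ).eq, hx, zero_dotProduct]

theorem sum_lapMatrix_mulVec_eq_zero (θ : V → ℝ) : ∑ v, (H.lapMatrix ℝ *ᵥ θ) v = 0 := by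
  simpa [dotProduct] using dotProduct_lapMatrix_mulVec_eq_zero H.lapMatrix_mulVec_const_eq_zero θ

theorem ConnectedComponent.sum_lapMatrix_mulVec_eq_zero (C : H.ConnectedComponent)
    (θ : V → ℝ) : ∑ v ∈ C.supp.toFinset, (H.lapMatrix ℝ *ᵥ θ) v = 0 := by
  have hC := mem_ker_toLin'_lapMatrix_of_connectedComponent C
  rw [LinearMap.mem_ker, toLin'_apply] at hC
  have h := dotProduct_lapMatrix_mulVec_eq_zero hC θ
  simp only [dotProduct, ite_mul, one_mul, zero_mul, ← Finset.sum_filter] at h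
  convert h using 2
  ext v
  simp [mem_supp_iff]

theorem Connected.exists_lapMatrix_mulVec_eq (hH : H.Connected) {c : V → ℝ}
    (hc : ∑ v, c v = 0) : ∃ θ, H.lapMatrix ℝ *ᵥ θ = c := by
  let total : (V → ℝ) →ₗ[ℝ] ℝ := ∑ v, LinearMap.proj v
  have htotal (x : V → ℝ) : total x = ∑ v, x v := by simp [total]
  obtain ⟨v₀⟩ := hH.nonempty
  have hrange : LinearMap.range (H.lapMatrix ℝ).toLin' = LinearMap.ker total := by
    refine Submodule.eq_of_le_of_finrank_le ?_ ?_
    · rintro _ ⟨θ, rfl⟩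
      simpa [htotal] using H.sum_lapMatrix_mulVec_eq_zero θ
    · have hker : Module.finrank ℝ (LinearMap.ker (H.lapMatrix ℝ).toLin') = 1 := by
        rw [← card_connectedComponent_eq_finrank_ker_toLin'_lapMatrix]
        have := hH.preconnected.subsingleton_connectedComponent
        have : Nonempty H.ConnectedComponent := ⟨H.connectedComponentMk v₀⟩
        exact le_antisymm (Fintype.card_le_one_iff_subsingleton.2 ‹_›) Fintype.card_pos
      have htotal_ne : LinearMap.ker total ≠ ⊤ := fun htop => by
        simpa [htotal] using LinearMap.congr_fun (LinearMap.ker_eq_top.1 htop) (Pi.single v₀ 1)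
      have hlt := Submodule.finrank_lt htotal_ne
      have hrank := LinearMap.finrank_range_add_finrank_ker (H.lapMatrix ℝ).toLin'
      rw [Module.finrank_fintype_fun_eq_card] at hlt hrank
      omega
  obtain ⟨θ, hθ⟩ : c ∈ LinearMap.range (H.lapMatrix ℝ).toLin' := by
    rw [hrange, LinearMap.mem_ker, htotal, hc]
  exact ⟨θ, hθ⟩

theorem ConnectedComponent.abs_sum_le_of_lapMatrix_mulVec_eq {c θ dp dm : V → ℝ}
    (hdp : ∀ v, 0 ≤ dp v) (hdm : ∀ v, 0 ≤ dm v) (hθ : H.lapMatrix ℝ *ᵥ θ = c + dp - dm)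
    (C : H.ConnectedComponent) :
    |∑ v ∈ C.supp.toFinset, c v| ≤ ∑ v ∈ C.supp.toFinset, (dp v + dm v) := by
  have hbal := C.sum_lapMatrix_mulVec_eq_zero θ
  simp only [hθ, Pi.add_apply, Pi.sub_apply, Finset.sum_sub_distrib,
    Finset.sum_add_distrib] at hbal
  rw [Finset.sum_add_distrib]
  refine abs_le.2 ⟨?_, ?_⟩ <;>
  · have := Finset.sum_nonneg fun v (_ : v ∈ C.supp.toFinset) => hdp v
    have := Finset.sum_nonneg fun v (_ : v ∈ C.supp.toFinset) => hdm v
    linarith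

end SimpleGraph

section ConnectednessLP

variable {V : Type} [Fintype V] [DecidableEq V] {H : SimpleGraph V} {c : V → ℝ}

theorem le_lpVal {b : ℝ} (hb : ∀ θ dp dm : V → ℝ, (∀ v, 0 ≤ dp v) → (∀ v, 0 ≤ dm v) →
    H.lapMatrix ℝ *ᵥ θ = c + dp - dm → b ≤ ∑ v, (dp v + dm v)) : b ≤ lpVal H c := by
  refine le_csInf ⟨_, 0, c⁻, c⁺, negPart_nonneg c, posPart_nonneg c, ?_, rfl⟩ ?_
  · rw [mulVec_zero, add_sub_assoc, ← neg_sub, posPart_sub_negPart, add_neg_cancel]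
  · rintro _ ⟨θ, dp, dm, hdp, hdm, hθ, rfl⟩
    exact hb θ dp dm hdp hdm hθ

theorem lpVal_eq_zero_of_connected (hH : H.Connected) (hc : ∑ v, c v = 0) : lpVal H c = 0 := by
  obtain ⟨θ, hθ⟩ := hH.exists_lapMatrix_mulVec_eq hc
  refine IsLeast.csInf_eq ⟨⟨θ, 0, 0, fun _ => le_rfl, fun _ => le_rfl, by simp [hθ], by simp⟩, ?_⟩
  rintro _ ⟨θ, dp, dm, hdp, hdm, -, rfl⟩
  exact Finset.sum_nonneg fun v _ => add_nonneg (hdp v) (hdm v)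

end ConnectednessLP

theorem prop1_II_general
    {V : Type} [Fintype V] [DecidableEq V]
    (G : SimpleGraph V)
    (c : V → ℝ) (hc : UniquelyBalanced G c)
    (m₀ : ℝ)
    (hm₀ : IsLeast {x : ℝ | ∃ S : Set V, S.Nonempty ∧ S ≠ Set.univ ∧
      (G.induce S).Connected ∧ x = |∑ v ∈ S.toFinset, c v|} m₀) :
    0 < m₀ ∧ ∀ H : SimpleGraph V, H ≤ G → (¬ H.Connected ↔ 2 * m₀ ≤ lpVal H c) := by
  obtain ⟨S, hS, hSuniv, hSconn, hm₀_eq⟩ := hm₀.1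
  have hm₀_pos : 0 < m₀ := hm₀_eq ▸ abs_pos.2 (hc.2 S hS hSuniv hSconn)
  refine ⟨hm₀_pos, fun H hHG => ⟨fun hH => ?_, fun hval hH => ?_⟩⟩
  · have : Nonempty V := hS.to_subtype.map Subtype.val
    obtain ⟨C, D, hCD⟩ := SimpleGraph.exists_connectedComponent_ne_of_not_connected hH
    have hm₀_le {C D : H.ConnectedComponent} (hCD : C ≠ D) :
        m₀ ≤ |∑ v ∈ C.supp.toFinset, c v| :=
      -- `congr!` reconciles two different `Fintype` instances on `C.supp`
      hm₀.2 ⟨C.supp, C.nonempty_supp, C.supp_ne_univ_of_ne hCD,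
        C.connected_induce_supp_of_le hHG, by congr!⟩
    refine le_lpVal fun θ dp dm hdp hdm hθ => ?_
    calc 2 * m₀
        ≤ |∑ v ∈ C.supp.toFinset, c v| + |∑ v ∈ D.supp.toFinset, c v| := by
          linarith [hm₀_le hCD, hm₀_le hCD.symm]
      _ ≤ ∑ v ∈ C.supp.toFinset, (dp v + dm v) + ∑ v ∈ D.supp.toFinset, (dp v + dm v) :=
          add_le_add (C.abs_sum_le_of_lapMatrix_mulVec_eq hdp hdm hθ)
            (D.abs_sum_le_of_lapMatrix_mulVec_eq hdp hdm hθ)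
      _ ≤ ∑ v, (dp v + dm v) :=
          C.sum_supp_add_sum_supp_le hCD fun v => add_nonneg (hdp v) (hdm v)
  · rw [lpVal_eq_zero_of_connected hH hc.1] at hval
    linarith

/-- **Proposition 1(II).** Let `G` be a finite simple connected graph on at least
two vertices and `c` uniquely balanced w.r.t. `G`. Let `m₀` be the minimum of
`|Σ_{v ∈ S} c v|` over nonempty proper `S ⊊ V` with `G[S]` connected. Then `m₀ > 0`, and a
spanning subgraph `H ≤ G` is disconnected iff `val(H, c) ≥ 2 m₀`. -/
theorem prop1_II
    {V : Type} [Fintype V] [DecidableEq V]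
    (G : SimpleGraph V) (hG : G.Connected) (hcard : 2 ≤ Fintype.card V)
    (c : V → ℝ) (hc : UniquelyBalanced G c)
    (m₀ : ℝ)
    (hm₀ : IsLeast {x : ℝ | ∃ S : Set V, S.Nonempty ∧ S ≠ Set.univ ∧
      (G.induce S).Connected ∧ x = |∑ v ∈ S.toFinset, c v|} m₀) :
    0 < m₀ ∧ ∀ H : SimpleGraph V, H ≤ G → (¬ H.Connected ↔ 2 * m₀ ≤ lpVal H c) :=
  prop1_II_general G c hc m₀ hm₀
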